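/- Let Ω ⊆ ℝ³ be a connected open set and u : Ω → ℝ³ twice continuously differentiable with ε u = (grad u + (grad u)ᵀ)/2 = 0 on Ω. Then there exist a ∈ ℝ³ and a skew-symmetric matrix B ∈ K such that u(x) = a + B x for all x ∈ Ω; i.e., the kernel of the symmetric gradient on a connected open set consists exactly of the infinitesimal rigid motions. -/

import Mathlib

/-! The third-order tensor `t(k, j, i) = ∂ₖ∂ⱼuᵢ` is symmetric in `(k, j)` by Schwarz's theorem
and, differentiating `∂ⱼuᵢ = -∂ᵢuⱼ`, antisymmetric in `(j, i)`. Applying the two symmetries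
alternately six times turns `t(k, j, i)` into `-t(k, j, i)`, so `D²u = 0`. On the connected set `Ω`
the derivative `Du` is then a constant skew-symmetric matrix `B`, and `u - B·` is constant. -/

open Matrix

/-- The partial derivative `∂ⱼ f` of a scalar field on `ℝ³`. -/
noncomputable def pd (j : Fin 3) (f : (Fin 3 → ℝ) → ℝ) (x : Fin 3 → ℝ) : ℝ :=
  fderiv ℝ f x (Pi.single j 1)

/-- The Jacobian matrix `(grad u)ᵢⱼ = ∂ⱼuᵢ` of a vector field `u : ℝ³ → ℝ³`. -/
noncomputable def gradM (u : (Fin 3 → ℝ) → (Fin 3 → ℝ)) (x : Fin 3 → ℝ) :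
    Matrix (Fin 3) (Fin 3) ℝ :=
  Matrix.of fun i j => pd j (fun y => u y i) x

/-- The symmetric gradient `ε u = (grad u + (grad u)ᵀ)/2`. -/
noncomputable def symGrad (u : (Fin 3 → ℝ) → (Fin 3 → ℝ)) (x : Fin 3 → ℝ) :
    Matrix (Fin 3) (Fin 3) ℝ :=
  (1 / 2 : ℝ) • (gradM u x + (gradM u x)ᵀ)

theorem eq_zero_of_symm_of_antisymm {α R : Type*} [NonAssocRing R] [NoZeroDivisors R]
    [CharZero R] (t : α → α → α → R) (hsymm : ∀ a b c, t a b c = t b a c)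
    (hanti : ∀ a b c, t a b c = -t a c b) (a b c : α) : t a b c = 0 := by
  refine CharZero.eq_neg_self_iff.mp ?_
  calc t a b c = -t a c b := hanti a b c
    _ = -t c a b := by rw [hsymm]
    _ = t c b a := by rw [hanti c a b, neg_neg]
    _ = t b c a := hsymm c b a
    _ = -t b a c := hanti b c a
    _ = -t a b c := by rw [hsymm]

theorem ContinuousLinearMap.ext_pi_single {ι R M : Type*} [Fintype ι] [DecidableEq ι]
    [Semiring R] [TopologicalSpace R] [AddCommMonoid M] [Module R M] [TopologicalSpace M]
    {f g : (ι → R) →L[R] M} (h : ∀ i, f (Pi.single i 1) = g (Pi.single i 1)) : f = g :=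
  ContinuousLinearMap.coe_injective <| LinearMap.pi_ext' fun i => LinearMap.ext_ring (h i)

theorem fderiv_fderiv_eq_zero_of_skew {ι : Type*} [Fintype ι] [DecidableEq ι]
    {u : (ι → ℝ) → ι → ℝ} {s : Set (ι → ℝ)} (hs : IsOpen s) (hu : ContDiffOn ℝ 2 u s)
    (hskew : ∀ y ∈ s, ∀ i j, fderiv ℝ u y (Pi.single j 1) i = -fderiv ℝ u y (Pi.single i 1) j)
    {x : ι → ℝ} (hx : x ∈ s) : fderiv ℝ (fderiv ℝ u) x = 0 := by
  set H := fderiv ℝ (fderiv ℝ u) x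
  have hux : ContDiffAt ℝ 2 u x := hu.contDiffAt (hs.mem_nhds hx)
  have hsymm : IsSymmSndFDerivAt ℝ u x :=
    hux.isSymmSndFDerivAt (by simp [minSmoothness_of_isRCLikeNormedField])
  have hH : HasFDerivAt (fderiv ℝ u) H x :=
    ((hux.fderiv_right (m := 1) le_rfl).differentiableAt one_ne_zero).hasFDerivAt
  have hentry : ∀ a w v, fderiv ℝ (fun y => fderiv ℝ u y w a) x v = H v w a := by
    intro a w v
    have hDw := hH.differentiableAt.clm_apply (differentiableAt_const w)
    simp [fderiv_apply hDw, fderiv_clm_apply hH.differentiableAt (differentiableAt_const w),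
      hH.fderiv]
  have hanti : ∀ k i j, H (Pi.single k 1) (Pi.single j 1) i
      = -H (Pi.single k 1) (Pi.single i 1) j := by
    intro k i j
    have heq : (fun y => fderiv ℝ u y (Pi.single j 1) i)
        =ᶠ[nhds x] fun y => -fderiv ℝ u y (Pi.single i 1) j :=
      Filter.eventually_of_mem (hs.mem_nhds hx) fun y hy => hskew y hy i j
    simpa [hentry, fderiv_fun_neg] using congrArg (· (Pi.single k 1)) (heq.fderiv_eq (𝕜 := ℝ))
  have hzero := eq_zero_of_symm_of_antisymm (fun k j i => H (Pi.single k 1) (Pi.single j 1) i)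
    (fun k j i => congrFun (hsymm _ _) i) (fun k j i => hanti k i j)
  exact ContinuousLinearMap.ext_pi_single fun k => ContinuousLinearMap.ext_pi_single fun j =>
    funext fun i => hzero k j i

theorem IsOpen.exists_eq_add_of_fderiv_fderiv_eq_zero {E F : Type*}
    [NormedAddCommGroup E] [NormedSpace ℝ E] [NormedAddCommGroup F] [NormedSpace ℝ F]
    {u : E → F} {s : Set E} (hs : IsOpen s) (hs' : IsPreconnected s)
    (hu : DifferentiableOn ℝ u s) (hDu : DifferentiableOn ℝ (fderiv ℝ u) s)
    (hD2u : s.EqOn (fderiv ℝ (fderiv ℝ u)) 0) {x₀ : E} (hx₀ : x₀ ∈ s) :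
    ∃ a, s.EqOn u (fderiv ℝ u x₀ · + a) := by
  refine hs.exists_eq_add_of_fderiv_eq hs' hu (fderiv ℝ u x₀).differentiableOn fun x hx => ?_
  rw [hs.is_const_of_fderiv_eq_zero hs' hDu hD2u hx hx₀, ContinuousLinearMap.fderiv]

theorem gradM_apply {u : (Fin 3 → ℝ) → Fin 3 → ℝ} {x : Fin 3 → ℝ} (hu : DifferentiableAt ℝ u x)
    (i j : Fin 3) : gradM u x i j = fderiv ℝ u x (Pi.single j 1) i := by
  simp [gradM, pd, fderiv_apply hu]

theorem fderiv_skew_of_symGrad_eq_zero {u : (Fin 3 → ℝ) → Fin 3 → ℝ} {x : Fin 3 → ℝ}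
    (hu : DifferentiableAt ℝ u x) (h : symGrad u x = 0) (i j : Fin 3) :
    fderiv ℝ u x (Pi.single j 1) i = -fderiv ℝ u x (Pi.single i 1) j := by
  have hsum : gradM u x + (gradM u x)ᵀ = 0 := (smul_eq_zero.mp h).resolve_left (by norm_num)
  have hentry := congrFun (congrFun hsum i) j
  rw [Matrix.add_apply, transpose_apply, gradM_apply hu, gradM_apply hu, Matrix.zero_apply]
    at hentry
  exact eq_neg_of_add_eq_zero_left hentry

/-- On a connected open set `Ω ⊆ ℝ³`, a `C²` vector field with vanishing symmetric
gradient is an infinitesimal rigid motion: `u(x) = a + Bx` with `B` skew-symmetric. -/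
theorem rigid_motion_of_symGrad_eq_zero (Ω : Set (Fin 3 → ℝ)) (hΩ : IsOpen Ω)
    (hconn : IsConnected Ω) (u : (Fin 3 → ℝ) → (Fin 3 → ℝ))
    (hu : ContDiffOn ℝ 2 u Ω) (heps : ∀ x ∈ Ω, symGrad u x = 0) :
    ∃ (a : Fin 3 → ℝ) (B : Matrix (Fin 3) (Fin 3) ℝ),
      Bᵀ = -B ∧ ∀ x ∈ Ω, u x = a + B *ᵥ x := by
  obtain ⟨x₀, hx₀⟩ := hconn.nonempty
  have hskew : ∀ x ∈ Ω, ∀ i j,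
      fderiv ℝ u x (Pi.single j 1) i = -fderiv ℝ u x (Pi.single i 1) j := fun x hx =>
    fderiv_skew_of_symGrad_eq_zero (hu.differentiableOn (by norm_num) |>.differentiableAt
      (hΩ.mem_nhds hx)) (heps x hx)
  obtain ⟨a, ha⟩ := hΩ.exists_eq_add_of_fderiv_fderiv_eq_zero hconn.isPreconnected
    (hu.differentiableOn (by norm_num))
    ((hu.fderiv_of_isOpen hΩ (m := 1) le_rfl).differentiableOn one_ne_zero)
    (fun x hx => fderiv_fderiv_eq_zero_of_skew hΩ hu hskew hx) hx₀
  refine ⟨a, LinearMap.toMatrix' (fderiv ℝ u x₀ : (Fin 3 → ℝ) →ₗ[ℝ] Fin 3 → ℝ), ?_,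
    fun x hx => ?_⟩
  · ext i j
    simp [LinearMap.toMatrix'_apply, hskew x₀ hx₀ j i]
  · rw [ha hx, LinearMap.toMatrix'_mulVec, add_comm]
    rfl
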